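/- The Mordell–Tornheim value T(1,1;2) = ∑_{m1,m2≥1} 1/(m1·m2·(m1+m2)^2) equals π^4/180. -/
import Mathlib

open Real Set Function

lemma summable_base : Summable (fun n : ℕ => 1 / ((n : ℝ) + 1) ^ 2) := by
  have := ((Real.summable_one_div_nat_pow (p := 2)).2 one_lt_two).comp_injective
    (add_right_injective 1)
  refine this.congr fun n => ?_
  simp [Function.comp]; ring

lemma tsum_base : ∑' n : ℕ, 1 / ((n : ℝ) + 1) ^ 2 = π ^ 2 / 6 := by
  have h := hasSum_zeta_two.tsum_eq
  rw [Summable.tsum_eq_zero_add hasSum_zeta_two.summable] at h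
  simp only [Nat.cast_zero, Nat.cast_add, Nat.cast_one] at h
  simpa using h

lemma summable_base4 : Summable (fun n : ℕ => 1 / ((n : ℝ) + 1) ^ 4) := by
  have := ((Real.summable_one_div_nat_pow (p := 4)).2 (by norm_num)).comp_injective
    (add_right_injective 1)
  refine this.congr fun n => ?_
  simp [Function.comp]; ring

lemma tsum_base4 : ∑' n : ℕ, 1 / ((n : ℝ) + 1) ^ 4 = π ^ 4 / 90 := by
  have h := hasSum_zeta_four.tsum_eq
  rw [Summable.tsum_eq_zero_add hasSum_zeta_four.summable] at h
  simp only [Nat.cast_zero, Nat.cast_add, Nat.cast_one] at h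
  simpa using h

noncomputable def Faux : ℕ × ℕ → ℝ :=
  fun p => 1 / (((p.1 : ℝ) + 1) * ((p.2 : ℝ) + 1) * (((p.1 : ℝ) + 1) + ((p.2 : ℝ) + 1)) ^ 2)

noncomputable def Gaux : ℕ × ℕ → ℝ :=
  fun p => 1 / (((p.1 : ℝ) + 1) ^ 2 * ((p.2 : ℝ) + 1) ^ 2)

lemma Gaux_summable : Summable Gaux := by
  have := summable_base.mul_of_nonneg summable_base
    (fun n => by positivity) (fun n => by positivity)
  refine this.congr fun p => ?_
  simp [Gaux]; ring

set_option maxHeartbeats 1000000 in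
lemma Gaux_tsum : ∑' p, Gaux p = (π ^ 2 / 6) ^ 2 := by
  have h := Summable.tsum_mul_tsum (f := fun n : ℕ => 1 / ((n : ℝ) + 1) ^ 2)
    (g := fun n : ℕ => 1 / ((n : ℝ) + 1) ^ 2) summable_base summable_base
    (summable_base.mul_of_nonneg summable_base (fun n => by positivity) (fun n => by positivity))
  rw [tsum_base] at h
  rw [show Gaux = fun p : ℕ × ℕ => (1 / ((p.1 : ℝ) + 1) ^ 2) * (1 / ((p.2 : ℝ) + 1) ^ 2) by
    funext p; simp only [Gaux]; rw [div_mul_div_comm, one_mul], ← h]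
  ring

def iS : ℕ × ℕ → ℕ × ℕ := fun p => (p.1, p.1 + p.2 + 1)
def iT : ℕ × ℕ → ℕ × ℕ := fun p => (p.1 + p.2 + 1, p.2)
def iD : ℕ → ℕ × ℕ := fun n => (n, n)

lemma iS_inj : Injective iS := by
  intro p q h
  simp only [iS, Prod.mk.injEq] at h
  obtain ⟨h1, h2⟩ := h
  ext <;> omega

lemma iT_inj : Injective iT := by
  intro p q h
  simp only [iT, Prod.mk.injEq] at h
  obtain ⟨h1, h2⟩ := h
  ext <;> omega

lemma iD_inj : Injective iD := fun a b h => (Prod.mk.injEq _ _ _ _ ▸ h).1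

lemma range_iS : range iS = {p : ℕ × ℕ | p.1 < p.2} := by
  ext ⟨a, b⟩
  simp only [iS, mem_range, Prod.mk.injEq, mem_setOf_eq]
  constructor
  · rintro ⟨⟨m, n⟩, h1, h2⟩; omega
  · intro h; exact ⟨(a, b - a - 1), rfl, by omega⟩

lemma range_iT : range iT = {p : ℕ × ℕ | p.2 < p.1} := by
  ext ⟨a, b⟩
  simp only [iT, mem_range, Prod.mk.injEq, mem_setOf_eq]
  constructor
  · rintro ⟨⟨m, n⟩, h1, h2⟩; omega
  · intro h; exact ⟨(a - b - 1, b), by omega, rfl⟩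

lemma range_iD : range iD = {p : ℕ × ℕ | p.1 = p.2} := by
  ext ⟨a, b⟩
  simp only [iD, mem_range, Prod.mk.injEq, mem_setOf_eq]
  constructor
  · rintro ⟨n, h1, h2⟩; omega
  · intro h; exact ⟨a, rfl, h⟩

-- H := Gaux ∘ iS, H' := Gaux ∘ iT
lemma tsum_indS : ∑' p, ({p : ℕ × ℕ | p.1 < p.2}).indicator Gaux p = ∑' p, Gaux (iS p) := by
  rw [← range_iS]
  rw [← iS_inj.tsum_eq (f := (range iS).indicator Gaux)
    (support_indicator_subset.trans (by rfl))]
  refine tsum_congr fun p => ?_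
  rw [indicator_of_mem (mem_range_self p)]

lemma tsum_indT : ∑' p, ({p : ℕ × ℕ | p.2 < p.1}).indicator Gaux p = ∑' p, Gaux (iT p) := by
  rw [← range_iT]
  rw [← iT_inj.tsum_eq (f := (range iT).indicator Gaux)
    (support_indicator_subset.trans (by rfl))]
  refine tsum_congr fun p => ?_
  rw [indicator_of_mem (mem_range_self p)]

lemma tsum_indD : ∑' p, ({p : ℕ × ℕ | p.1 = p.2}).indicator Gaux p = π ^ 4 / 90 := by
  rw [← range_iD]
  rw [← iD_inj.tsum_eq (f := (range iD).indicator Gaux)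
    (support_indicator_subset.trans (by rfl))]
  rw [← tsum_base4]
  refine tsum_congr fun n => ?_
  rw [indicator_of_mem (mem_range_self n)]
  simp only [Gaux, iD]
  congr 1
  ring

lemma H_summable : Summable (fun p => Gaux (iS p)) := Gaux_summable.comp_injective iS_inj
lemma H'_summable : Summable (fun p => Gaux (iT p)) := Gaux_summable.comp_injective iT_inj

lemma F_nonneg (p : ℕ × ℕ) : 0 ≤ Faux p := by
  simp only [Faux]; positivity

lemma F_le (p : ℕ × ℕ) : Faux p ≤ Gaux p := by
  simp only [Faux, Gaux]
  apply one_div_le_one_div_of_le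
  · positivity
  · have h1 : (0:ℝ) ≤ (p.1 : ℝ) := Nat.cast_nonneg _
    have h2 : (0:ℝ) ≤ (p.2 : ℝ) := Nat.cast_nonneg _
    nlinarith [sq_nonneg ((p.1:ℝ) + (p.2:ℝ)), mul_nonneg h1 h2]

lemma F_summable : Summable Faux := Summable.of_nonneg_of_le F_nonneg F_le Gaux_summable

lemma key_identity (p : ℕ × ℕ) :
    Gaux p = Gaux (iS p) + 2 * Faux p + Gaux (iT p) := by
  simp only [Gaux, Faux, iS, iT]
  have h1 : (0:ℝ) < (p.1 : ℝ) + 1 := by positivity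
  have h2 : (0:ℝ) < (p.2 : ℝ) + 1 := by positivity
  push_cast
  field_simp
  ring

lemma tsum_split1 : ∑' p, Gaux p =
    (∑' p, Gaux (iS p)) + 2 * (∑' p, Faux p) + ∑' p, Gaux (iT p) := by
  calc ∑' p, Gaux p = ∑' p, (Gaux (iS p) + 2 * Faux p + Gaux (iT p)) := tsum_congr key_identity
    _ = _ := by
        rw [Summable.tsum_add (H_summable.add (F_summable.mul_left 2)) H'_summable,
          Summable.tsum_add H_summable (F_summable.mul_left 2), tsum_mul_left]

lemma indicator_split (p : ℕ × ℕ) :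
    Gaux p = ({p : ℕ × ℕ | p.1 < p.2}).indicator Gaux p
      + ({p : ℕ × ℕ | p.1 = p.2}).indicator Gaux p
      + ({p : ℕ × ℕ | p.2 < p.1}).indicator Gaux p := by
  simp only [Set.indicator_apply, Set.mem_setOf_eq]
  split_ifs <;> first | omega | ring

lemma tsum_split2 : ∑' p, Gaux p =
    (∑' p, Gaux (iS p)) + π ^ 4 / 90 + ∑' p, Gaux (iT p) := by
  have hS := Gaux_summable.indicator {p : ℕ × ℕ | p.1 < p.2}
  have hD := Gaux_summable.indicator {p : ℕ × ℕ | p.1 = p.2}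
  have hT := Gaux_summable.indicator {p : ℕ × ℕ | p.2 < p.1}
  calc ∑' p, Gaux p = ∑' p, (({p : ℕ × ℕ | p.1 < p.2}).indicator Gaux p
      + ({p : ℕ × ℕ | p.1 = p.2}).indicator Gaux p
      + ({p : ℕ × ℕ | p.2 < p.1}).indicator Gaux p) := tsum_congr indicator_split
    _ = _ := by
        rw [Summable.tsum_add (hS.add hD) hT, Summable.tsum_add hS hD, tsum_indS, tsum_indD, tsum_indT]

lemma F_tsum : ∑' p, Faux p = π ^ 4 / 180 := by
  have h := tsum_split1.symm.trans tsum_split2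
  linarith

/-- The Mordell–Tornheim value `T(1,1;2) = ∑_{m1,m2 ≥ 1} 1/(m1 m2 (m1+m2)^2)`
equals `π^4/180`. -/
theorem stmt_3 :
    (∑' m : ℕ+ × ℕ+, 1 / ((m.1 : ℝ) * (m.2 : ℝ) * ((m.1 : ℝ) + (m.2 : ℝ)) ^ 2))
      = Real.pi ^ 4 / 180 := by
  rw [← F_tsum]
  rw [← ((Equiv.pnatEquivNat.prodCongr Equiv.pnatEquivNat).symm).tsum_eq
    (fun m : ℕ+ × ℕ+ => 1 / ((m.1 : ℝ) * (m.2 : ℝ) * ((m.1 : ℝ) + (m.2 : ℝ)) ^ 2))]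
  refine tsum_congr fun p => ?_
  simp only [Equiv.prodCongr_symm, Equiv.prodCongr_apply, Equiv.symm_symm, Prod.map,
    Equiv.pnatEquivNat, Equiv.coe_fn_symm_mk, Faux]
  push_cast [Nat.succPNat_coe]
  ring_nf
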